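/- Let u : ℝ → ℝ be differentiable. Let φ ∈ ℝ and (ξ₂,ξ₄,ξ₅,ξ₆) ∈ ℝ⁴\{0}, set r = √(ξ₂²+ξ₄²+ξ₅²+ξ₆²), x = (cosφ, 0, sinφ, 0, 0, 0) ∈ ℝ⁶, ξ = (0,ξ₂,0,ξ₄,ξ₅,ξ₆) ∈ ℝ⁶, and z = cosh(r)·x + i·(sinh(r)/r)·ξ ∈ ℂ⁶. Then, with η = ξ₁₂ + ξ₃₄ + ξ₅₆ ∈ M(6,ℝ), one has u′(‖z‖²)·((i·z) ∙ (η·z)) = −K(r)·(cosφ·ξ₂ + sinφ·ξ₄), where K(t) = u′(cosh(2t))·sinh(2t)/t. -/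

import Mathlib

open Real Complex Matrix

noncomputable section

/-- The real inner product on `ℂ^m`:
`v ∙ w = ∑ⱼ (Re vⱼ)(Re wⱼ) + (Im vⱼ)(Im wⱼ)`. -/
noncomputable def dotR {m : ℕ} (v w : Fin m → ℂ) : ℝ :=
  ∑ j, ((v j).re * (w j).re + (v j).im * (w j).im)

/-- `ξ_{ij} = E_{ji} − E_{ij}`. -/
def xiMat {m : ℕ} (i j : Fin m) : Matrix (Fin m) (Fin m) ℝ :=
  Matrix.single j i 1 - Matrix.single i j 1

/-!
Write `z = a + i b` with `a = cosh r · x` and `b = (sinh r / r) · ξ` real. Then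
`‖z‖² = |a|² + |b|² = cosh² r + sinh² r = cosh 2r`, and since `η` is skew-symmetric,
`(i z) ∙ (η z) = a · η b - b · η a = 2 a · η b = (2 cosh r sinh r / r) x · η ξ`,
where `x · η ξ = -(cos φ ξ₂ + sin φ ξ₄)`.
-/

theorem re_comp_map_ofReal_mulVec {n p : Type*} [Fintype p] (A : Matrix n p ℝ) (z : p → ℂ) :
    re ∘ (A.map ofReal *ᵥ z) = A *ᵥ (re ∘ z) := by
  ext j; simp [mulVec, dotProduct, re_sum]

theorem im_comp_map_ofReal_mulVec {n p : Type*} [Fintype p] (A : Matrix n p ℝ) (z : p → ℂ) :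
    im ∘ (A.map ofReal *ᵥ z) = A *ᵥ (im ∘ z) := by
  ext j; simp [mulVec, dotProduct, im_sum]

section dotR

variable {m : ℕ}

theorem dotR_eq_re_dotProduct_add_im_dotProduct (v w : Fin m → ℂ) :
    dotR v w = (re ∘ v) ⬝ᵥ (re ∘ w) + (im ∘ v) ⬝ᵥ (im ∘ w) := by
  simp only [dotR, dotProduct, Function.comp_apply, Finset.sum_add_distrib]

theorem dotR_I_mul_mulVec_of_transpose_eq_neg {A : Matrix (Fin m) (Fin m) ℝ} (hA : Aᵀ = -A)
    (z : Fin m → ℂ) :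
    dotR (fun j => I * z j) (A.map ofReal *ᵥ z) = 2 * ((re ∘ z) ⬝ᵥ (A *ᵥ (im ∘ z))) := by
  have hskew : (im ∘ z) ⬝ᵥ (A *ᵥ (re ∘ z)) = -((re ∘ z) ⬝ᵥ (A *ᵥ (im ∘ z))) := by
    rw [dotProduct_mulVec, ← mulVec_transpose, hA, dotProduct_comm, neg_mulVec, dotProduct_neg]
  have hIre : (re ∘ fun j => I * z j) = -(im ∘ z) := by ext j; simp
  have hIim : (im ∘ fun j => I * z j) = re ∘ z := by ext j; simp
  rw [dotR_eq_re_dotProduct_add_im_dotProduct, re_comp_map_ofReal_mulVec,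
    im_comp_map_ofReal_mulVec, hIre, hIim, neg_dotProduct, hskew]
  ring

end dotR

theorem xiMat_transpose {m : ℕ} (i j : Fin m) : (xiMat i j)ᵀ = -xiMat i j := by
  simp [xiMat, transpose_single]

theorem dotProduct_xiMat_mulVec {m : ℕ} (i j : Fin m) (v w : Fin m → ℝ) :
    w ⬝ᵥ (xiMat i j *ᵥ v) = w j * v i - w i * v j := by
  simp [xiMat, sub_mulVec, single_mulVec_eq, dotProduct_sub, mul_comm]

theorem sinh_div_mul_self (r : ℝ) : Real.sinh r / r * r = Real.sinh r :=
  div_mul_cancel_of_imp fun h => by rw [h, Real.sinh_zero]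

theorem stmt_5_general (u : ℝ → ℝ)
    (φ ξ₂ ξ₄ ξ₅ ξ₆ : ℝ)
    (r : ℝ) (hr : r = Real.sqrt (ξ₂ ^ 2 + ξ₄ ^ 2 + ξ₅ ^ 2 + ξ₆ ^ 2))
    (x ξ : Fin 6 → ℝ)
    (hx : x = ![Real.cos φ, 0, Real.sin φ, 0, 0, 0])
    (hξv : ξ = ![0, ξ₂, 0, ξ₄, ξ₅, ξ₆])
    (z : Fin 6 → ℂ)
    (hz : z = fun j => ((Real.cosh r * x j : ℝ) : ℂ) +
      Complex.I * ((Real.sinh r / r * ξ j : ℝ) : ℂ))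
    (η : Matrix (Fin 6) (Fin 6) ℝ) (hη : η = xiMat 0 1 + xiMat 2 3 + xiMat 4 5)
    (K : ℝ → ℝ) (hK : K = fun t => deriv u (Real.cosh (2 * t)) * Real.sinh (2 * t) / t) :
    deriv u (dotR z z) *
        dotR (fun j => Complex.I * z j) ((η.map (fun a => (a : ℂ))).mulVec z)
      = -K r * (Real.cos φ * ξ₂ + Real.sin φ * ξ₄) := by
  have hre : re ∘ z = Real.cosh r • x := by ext j; simp [hz]
  have him : im ∘ z = (Real.sinh r / r) • ξ := by
    ext j; simp only [hz, Function.comp_apply, add_im, ofReal_im, I_mul_im, ofReal_re, zero_add,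
      Pi.smul_apply, smul_eq_mul]
  have hxx : x ⬝ᵥ x = 1 := by simp [hx, dotProduct, Fin.sum_univ_six, ← sq]
  have hξξ : ξ ⬝ᵥ ξ = r ^ 2 := by
    rw [hr, Real.sq_sqrt (by positivity)]
    simp [hξv, dotProduct, Fin.sum_univ_six, ← sq]
  have hxηξ : x ⬝ᵥ (η *ᵥ ξ) = -(Real.cos φ * ξ₂ + Real.sin φ * ξ₄) := by
    simp only [hη, add_mulVec, dotProduct_add, dotProduct_xiMat_mulVec]
    simp [hx, hξv]
    ring
  have hnorm : dotR z z = Real.cosh (2 * r) := by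
    rw [dotR_eq_re_dotProduct_add_im_dotProduct, hre, him]
    simp only [smul_dotProduct, dotProduct_smul, hxx, hξξ, smul_eq_mul, Real.cosh_two_mul]
    linear_combination (Real.sinh r / r * r + Real.sinh r) * sinh_div_mul_self r
  have hskew : ηᵀ = -η := by
    simp only [hη, transpose_add, xiMat_transpose]; abel
  have hmoment : dotR (fun j => I * z j) (η.map ofReal *ᵥ z)
      = -(Real.sinh (2 * r) / r) * (Real.cos φ * ξ₂ + Real.sin φ * ξ₄) := by
    rw [dotR_I_mul_mulVec_of_transpose_eq_neg hskew, hre, him, mulVec_smul, smul_dotProduct,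
      dotProduct_smul, hxηξ, Real.sinh_two_mul]
    simp only [smul_eq_mul]
    ring
  rw [hnorm, hmoment, hK]
  ring

/-- The moment map component `μ_η` of the diagonal `SO(2)`-action on `T*S⁵`
at points of `Φ(L₂)`, `L₂ = T^{*⊥}S¹ ⊂ T*S⁵`:
`u′(‖z‖²)·((i·z) ∙ (η·z)) = −K(r)·(cosφ·ξ₂ + sinφ·ξ₄)` with
`K(t) = u′(cosh 2t)·sinh(2t)/t`. -/
theorem stmt_5 (u : ℝ → ℝ) (hu : Differentiable ℝ u)
    (φ ξ₂ ξ₄ ξ₅ ξ₆ : ℝ) (hξ : ¬(ξ₂ = 0 ∧ ξ₄ = 0 ∧ ξ₅ = 0 ∧ ξ₆ = 0))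
    (r : ℝ) (hr : r = Real.sqrt (ξ₂ ^ 2 + ξ₄ ^ 2 + ξ₅ ^ 2 + ξ₆ ^ 2))
    (x ξ : Fin 6 → ℝ)
    (hx : x = ![Real.cos φ, 0, Real.sin φ, 0, 0, 0])
    (hξv : ξ = ![0, ξ₂, 0, ξ₄, ξ₅, ξ₆])
    (z : Fin 6 → ℂ)
    (hz : z = fun j => ((Real.cosh r * x j : ℝ) : ℂ) +
      Complex.I * ((Real.sinh r / r * ξ j : ℝ) : ℂ))
    (η : Matrix (Fin 6) (Fin 6) ℝ) (hη : η = xiMat 0 1 + xiMat 2 3 + xiMat 4 5)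
    (K : ℝ → ℝ) (hK : K = fun t => deriv u (Real.cosh (2 * t)) * Real.sinh (2 * t) / t) :
    deriv u (dotR z z) *
        dotR (fun j => Complex.I * z j) ((η.map (fun a => (a : ℂ))).mulVec z)
      = -K r * (Real.cos φ * ξ₂ + Real.sin φ * ξ₄) :=
  stmt_5_general u φ ξ₂ ξ₄ ξ₅ ξ₆ r hr x ξ hx hξv z hz η hη K hK
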